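/- If Z_h[ℓ,m] is a monochrome block at the end of iteration h, then for every g > h the content of positions ℓ through m is unchanged: Z_g[ℓ,m] = Z_h[ℓ,m]. -/

import Mathlib

open List Finset

variable {A : Type*}

/-- Length of the longest common prefix of two lists. -/
def lcpLen [DecidableEq A] : List A → List A → ℕ
  | a :: as, b :: bs => if a = b then lcpLen as bs + 1 else 0
  | _, _ => 0

/-- `sa` is the suffix array of `t`: a bijection of `[0, |t|)` listing the
suffixes of `t` in increasing lexicographic order. -/
def isSuffixArray [LinearOrder A] (t : List A) (sa : ℕ → ℕ) : Prop :=
  Set.BijOn sa (Set.Iio t.length) (Set.Iio t.length) ∧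
    ∀ i j, i < j → j < t.length → t.drop (sa i) < t.drop (sa j)

/-- The BWT of `t` w.r.t. the suffix array `sa` (0-based):
`bwt[i] = t[n-1]` if `sa[i] = 0` and `bwt[i] = t[sa[i]-1]` otherwise. -/
def bwtOf [Inhabited A] (t : List A) (sa : ℕ → ℕ) (i : ℕ) : A :=
  if sa i = 0 then t.getD (t.length - 1) default else t.getD (sa i - 1) default

/-- The BWT of `t` as a list. -/
def bwtList [LinearOrder A] [Inhabited A] (t : List A) (sa : ℕ → ℕ) : List A :=
  List.ofFn (fun i : Fin t.length => bwtOf t sa i)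

/-- `t0` and `t1` end with distinct sentinels `$0 < $1` that are smaller than
all other symbols and occur nowhere else in `t0 ++ t1`. -/
def Sentinels [LinearOrder A] [Inhabited A] (t0 t1 : List A) : Prop :=
  t0 ≠ [] ∧ t1 ≠ [] ∧ t0.getLast! < t1.getLast! ∧
  (∀ c ∈ t0 ++ t1, c ≠ t0.getLast! → t0.getLast! < c) ∧
  (∀ c ∈ t0 ++ t1, c ≠ t0.getLast! → c ≠ t1.getLast! → t1.getLast! < c) ∧
  (t0 ++ t1).count t0.getLast! = 1 ∧ (t0 ++ t1).count t1.getLast! = 1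

/-- The multi-string BWT of `t0, t1` w.r.t. a suffix array `sa` of `t0 ++ t1`
(0-based): `bwt01[i] = $0` if `sa[i] = 0`, `bwt01[i] = $1` if `sa[i] = n0`,
and `bwt01[i] = (t0 t1)[sa[i]-1]` otherwise. -/
def mbwt [Inhabited A] (t0 t1 : List A) (sa : ℕ → ℕ) (i : ℕ) : A :=
  if sa i = 0 then t0.getLast!
  else if sa i = t0.length then t1.getLast!
  else (t0 ++ t1).getD (sa i - 1) default

/-- Position (index in `Z`) of the `i`-th (0-based) occurrence of bit `b`. -/
def nthBitPos (Z : List Bool) (b : Bool) (i : ℕ) : ℕ :=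
  ((List.range Z.length).filter (fun k => Z.getD k (!b) == b)).getD i Z.length

/-- The length-`h` prefix of the context (suffix of `t0` or `t1`) associated to
position `p` of the bit vector `Z`: position `p` holds the `r`-th `0`
(resp. `r`-th `1`) where `r` is the number of `0`s (resp. `1`s) before `p`. -/
def keyAt [LinearOrder A] (t0 t1 : List A) (sa0 sa1 : ℕ → ℕ) (h : ℕ)
    (Z : List Bool) (p : ℕ) : List A :=
  if Z.getD p false then (t1.drop (sa1 ((Z.take p).count true))).take h
  else (t0.drop (sa0 ((Z.take p).count false))).take h

/-- The LCP array of `t` w.r.t. `sa` (0-based), with `-1` at the two ends. -/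
def lcpArr [DecidableEq A] (t : List A) (sa : ℕ → ℕ) (i : ℕ) : ℤ :=
  if i = 0 ∨ t.length ≤ i then -1
  else (lcpLen (t.drop (sa (i - 1))) (t.drop (sa i)) : ℤ)

/-- One pass of the H&M algorithm: every bit `b` of `Z` is tagged with the next
symbol `c` of `bwt_b`, and the tagged bits are stably sorted by symbol. -/
def hmStep [LinearOrder A] [Inhabited A] (bwt0 bwt1 : List A) (Z : List Bool) :
    List Bool :=
  let pairs := (List.range Z.length).map (fun k =>
    let b := Z.getD k false
    let c := if b then bwt1.getD ((Z.take k).count true) default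
             else bwt0.getD ((Z.take k).count false) default
    (b, c))
  (pairs.mergeSort (fun p q => decide (p.2 ≤ q.2))).map Prod.fst

/-- The bit vector `Z_h` of the H&M algorithm: `Z_0 = 0^{n0} 1^{n1}` and
`Z_h = hmStep Z_{h-1}`. -/
def hmZ [LinearOrder A] [Inhabited A] (bwt0 bwt1 : List A) (n0 n1 : ℕ) :
    ℕ → List Bool
  | 0 => List.replicate n0 false ++ List.replicate n1 true
  | h + 1 => hmStep bwt0 bwt1 (hmZ bwt0 bwt1 n0 n1 h)

/-- Id of the block of `Z` containing position `k`: the largest `j ≤ k` with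
`B[j] ≠ 0`. -/
def blockIdAt (B : List ℕ) (k : ℕ) : ℕ :=
  ((List.range (k + 1)).filter (fun j => !(B.getD j 0 == 0))).foldr max 0

/-- One pass of the modified H&M algorithm also maintaining the marker array
`B`: bits tagged with their symbol and the id of their block are stably sorted
by symbol; a zero entry `B[j]` receives the value `h` iff a new block of `Z_h`
(a change of the pair (symbol, source-block id)) starts at `j`. -/
def gstep [LinearOrder A] [Inhabited A] (bwt0 bwt1 : List A) (h : ℕ)
    (ZB : List Bool × List ℕ) : List Bool × List ℕ :=
  let Z := ZB.1
  let B := ZB.2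
  let pairs := (List.range Z.length).map (fun k =>
    let b := Z.getD k false
    let c := if b then bwt1.getD ((Z.take k).count true) default
             else bwt0.getD ((Z.take k).count false) default
    (b, c, blockIdAt B k))
  let sorted := pairs.mergeSort (fun p q => decide (p.2.1 ≤ q.2.1))
  let Z' := sorted.map (·.1)
  let B' := (List.range B.length).map (fun j =>
    if B.getD j 0 ≠ 0 then B.getD j 0
    else if j < sorted.length ∧
        (j = 0 ∨ (sorted.getD (j - 1) default).2 ≠ (sorted.getD j default).2)
      then h else 0)
  (Z', B')

/-- State `(Z_h, B)` of the modified H&M / Gap algorithm after iteration `h`: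
`Z_0 = 0^{n0} 1^{n1}`, `B` initialized to `1 0^{n0+n1-1} 1`. -/
def gapState [LinearOrder A] [Inhabited A] (bwt0 bwt1 : List A) (n0 n1 : ℕ) :
    ℕ → List Bool × List ℕ
  | 0 => (List.replicate n0 false ++ List.replicate n1 true,
          1 :: (List.replicate (n0 + n1 - 1) 0 ++ [1]))
  | h + 1 => gstep bwt0 bwt1 (h + 1) (gapState bwt0 bwt1 n0 n1 h)

/-- `[ℓ,m]` is a logical `h`-block: a maximal run of suffix-array positions
whose suffixes share the same length-`h` prefix. -/
def isBlock [LinearOrder A] (t : List A) (sa : ℕ → ℕ) (h : ℕ) (ℓ m : ℕ) : Prop :=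
  ℓ ≤ m ∧ m < t.length ∧ lcpArr t sa ℓ < h ∧ lcpArr t sa (m + 1) < h ∧
    ∀ i, ℓ < i → i ≤ m → (h : ℤ) ≤ lcpArr t sa i

/-!
Encode every suffix of `t0` and of `t1` by its starting position `q` in `t0 ++ t1`. After `h`
passes, `Z_h` lists the string bits of these suffixes sorted by the length-`h` prefix of the
suffix of `t0 ++ t1` at `q`, ties broken by string and then by the suffix itself: a stable pass
by BWT symbol prepends one symbol to every key, and the sentinels make the tie-break consistent
with the suffix arrays of `t0` and `t1`. In particular the length-`h` prefixes read along `Z_h`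
coincide with those read along the suffix array of `t0 ++ t1`, so the entries of the block
`[ℓ, m]` of `Z_h` are exactly the suffixes with the block's common length-`h` prefix `w`. For
`g > h` the entry at a position of `[ℓ, m]` in `Z_g` has a length-`g` key extending `w`, hence it
is one of the entries of the block in `Z_h`, and carries the bit `b`.
-/

namespace List

variable {α β : Type*}

theorem getLast!_eq_getLast [Inhabited α] {l : List α} (hl : l ≠ []) :
    l.getLast! = l.getLast hl :=
  getLast!_of_getLast? (getLast?_eq_some_getLast hl)

theorem eq_of_getElem_eq_of_count_le_one [DecidableEq α] {l : List α} {i j : ℕ}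
    (hi : i < l.length) (hj : j < l.length) (hc : l.count l[i] ≤ 1) (h : l[i] = l[j]) :
    i = j := by
  by_contra hne
  have hdup : l.Duplicate l[i] := by
    refine duplicate_iff_exists_distinct_get.mpr ?_
    rcases lt_or_gt_of_ne hne with hlt | hlt
    · exact ⟨⟨i, hi⟩, ⟨j, hj⟩, hlt, rfl, h⟩
    · exact ⟨⟨j, hj⟩, ⟨i, hi⟩, hlt, h, rfl⟩
  have := duplicate_iff_two_le_count.mp hdup
  omega

theorem not_drop_prefix_drop [DecidableEq α] {l : List α} (hl : l ≠ [])
    (hc : l.count (l.getLast hl) ≤ 1) {i j : ℕ} (hi : i < l.length) (hij : i ≠ j) :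
    ¬ l.drop i <+: l.drop j := by
  rintro ⟨r, hr⟩
  have hdi : l.drop i ≠ [] := by simpa using hi
  have hr0 : r ≠ [] := by
    rintro rfl
    have := congrArg length hr
    simp only [append_nil, length_drop] at this
    omega
  have hlast : r.getLast hr0 = l.getLast hl := by
    have hdj : l.drop j ≠ [] := by rw [← hr]; simp [hr0]
    rw [← getLast_drop hdj, ← getLast_append_of_ne_nil (l := l.drop i) (by simp [hr0]) hr0]
    simp only [hr]
  have htwo : 2 ≤ (l.drop j).count (l.getLast hl) := by
    rw [← hr, count_append]
    have h1 : 0 < (l.drop i).count (l.getLast hl) :=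
      count_pos_iff.mpr (getLast_drop hdi ▸ getLast_mem hdi)
    have h2 : 0 < r.count (l.getLast hl) := count_pos_iff.mpr (hlast ▸ getLast_mem hr0)
    omega
  have := (drop_sublist j l).count_le (l.getLast hl)
  omega

section Lex

variable [LinearOrder α]

theorem take_le_take_of_le {x y : List α} (hxy : x ≤ y) (n : ℕ) : x.take n ≤ y.take n := by
  suffices ∀ {x y : List α}, Lex (· < ·) x y →
      ∀ n, x.take n < y.take n ∨ x.take n = y.take n by
    obtain hlt | rfl := hxy.lt_or_eq
    · exact (this hlt n).elim le_of_lt le_of_eq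
    · exact le_rfl
  intro x y hxy n
  induction hxy generalizing n with
  | nil => cases n <;> [right; left] <;> first | rfl | exact Lex.nil
  | rel hab => cases n <;> [right; left] <;> first | rfl | exact Lex.rel hab
  | cons _ ih =>
    cases n
    · right; rfl
    · simp only [take_succ_cons, cons.injEq, true_and]
      exact (ih _).imp_left Lex.cons

theorem append_lt_append_of_lt_of_not_prefix {x y : List α} (hxy : x < y) (hpre : ¬ x <+: y)
    (u v : List α) : x ++ u < y ++ v := by
  change Lex (· < ·) x y at hxy
  induction hxy with
  | nil => exact absurd nil_prefix hpre
  | rel hab => exact Lex.rel hab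
  | cons _ ih => exact Lex.cons (ih fun h => hpre (cons_prefix_cons.mpr ⟨rfl, h⟩))

end Lex

theorem filter_mergeSort_key_eq [LinearOrder β] (f : α → β) (l : List α) (c : β) :
    (l.mergeSort fun a b => decide (f a ≤ f b)).filter (fun a => f a = c)
      = l.filter (fun a => f a = c) := by
  have hsorted : (l.filter fun a => f a = c).Pairwise fun a b => decide (f a ≤ f b) :=
    pairwise_of_forall_mem_list fun a ha b hb => by
      simp only [mem_filter, decide_eq_true_eq] at ha hb
      simp [ha.2, hb.2]
  have hsub := (sublist_mergeSort (fun a b c hab hbc => by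
      simp only [decide_eq_true_eq] at *; exact le_trans hab hbc)
    (fun a b => by simpa using le_total (f a) (f b)) hsorted filter_sublist).filter
      (fun a => f a = c)
  simp only [filter_filter, Bool.and_self] at hsub
  exact (hsub.eq_of_length ((mergeSort_perm _ _).filter _).length_eq.symm).symm

theorem map_range_perm_of_injOn {f : ℕ → ℕ} {n : ℕ} (hmaps : ∀ x < n, f x < n)
    (hinj : Set.InjOn f (Set.Iio n)) : (range n).map f ~ range n :=
  (subperm_of_subset (nodup_range.map_on fun x hx y hy => hinj (by simpa using hx)
    (by simpa using hy)) fun x hx => by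
      obtain ⟨y, hy, rfl⟩ := mem_map.mp hx
      exact mem_range.mpr (hmaps y (mem_range.mp hy))).perm_of_length_le (by simp)

theorem getElem?_filter_count_take_map [BEq β] [LawfulBEq β] {f : α → β} {l : List α}
    {k : ℕ} (hk : k < l.length) {b : β} (hb : f l[k] = b) :
    (l.filter fun a => f a == b)[((l.map f).take k).count b]? = some l[k] := by
  have hf : l.filter (fun a => f a == b) = (l.take k).filter (fun a => f a == b) ++
      l[k] :: (l.drop (k + 1)).filter (fun a => f a == b) := by
    conv_lhs => rw [← take_append_drop k l, drop_eq_getElem_cons hk]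
    rw [filter_append, filter_cons_of_pos (by simp [hb])]
  rw [hf, ← map_take, count_eq_countP, countP_map, countP_eq_length_filter, Function.comp_def,
    getElem?_append_right le_rfl, Nat.sub_self, getElem?_cons_zero]

end List

section SuffixArray

theorem take_eq_take_of_le_lcpLen [DecidableEq A] :
    ∀ {x y : List A} {n : ℕ}, n ≤ lcpLen x y → x.take n = y.take n
  | _, _, 0, _ => by simp
  | [], _, _ + 1, hn => by simp [lcpLen] at hn
  | _ :: _, [], _ + 1, hn => by simp [lcpLen] at hn
  | a :: as, b :: bs, n + 1, hn => by
    by_cases hab : a = b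
    · subst hab
      simp only [lcpLen, if_true] at hn
      simp [take_eq_take_of_le_lcpLen (Nat.le_of_succ_le_succ hn)]
    · simp [lcpLen, hab] at hn

theorem eq_of_take_eq_take_of_lcpLen_lt [DecidableEq A] :
    ∀ {x y : List A} {n : ℕ}, x.take n = y.take n → lcpLen x y < n → x = y
  | [], [], _, _, _ => rfl
  | [], _ :: _, _ + 1, h, _ => by simp at h
  | _ :: _, [], _ + 1, h, _ => by simp at h
  | a :: as, b :: bs, n + 1, h, hlt => by
    simp only [take_succ_cons, cons.injEq] at h
    obtain ⟨rfl, h⟩ := h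
    simp only [lcpLen, if_true, Nat.add_lt_add_iff_right] at hlt
    rw [eq_of_take_eq_take_of_lcpLen_lt h hlt]

variable [LinearOrder A] {t : List A} {sa : ℕ → ℕ}

theorem isSuffixArray.take_drop_le (hsa : isSuffixArray t sa) (n : ℕ) {i j : ℕ} (hij : i ≤ j)
    (hj : j < t.length) : (t.drop (sa i)).take n ≤ (t.drop (sa j)).take n := by
  obtain hlt | rfl := hij.lt_or_eq
  · exact List.take_le_take_of_le (hsa.2 i j hlt hj).le n
  · exact le_rfl

theorem isSuffixArray.take_drop_eq_iff (hsa : isSuffixArray t sa) (n : ℕ) {i : ℕ}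
    (hi : i + 1 < t.length) :
    (t.drop (sa i)).take n = (t.drop (sa (i + 1))).take n ↔
      (n : ℤ) ≤ lcpArr t sa (i + 1) := by
  rw [lcpArr, if_neg (by omega), Nat.add_sub_cancel, Nat.cast_le]
  refine ⟨fun heq => ?_, take_eq_take_of_le_lcpLen⟩
  by_contra hlt
  exact (hsa.2 i (i + 1) i.lt_succ_self hi).ne
    (eq_of_take_eq_take_of_lcpLen_lt heq (not_le.mp hlt))

theorem isBlock.take_drop_eq (hsa : isSuffixArray t sa) {n ℓ m : ℕ} (hb : isBlock t sa n ℓ m)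
    {p : ℕ} (hℓp : ℓ ≤ p) (hpm : p ≤ m) :
    (t.drop (sa p)).take n = (t.drop (sa ℓ)).take n := by
  induction p, hℓp using Nat.le_induction with
  | base => rfl
  | succ p hℓp ih =>
    rw [← ih (by omega), eq_comm, hsa.take_drop_eq_iff n (by have := hb.2.1; omega)]
    exact hb.2.2.2.2 (p + 1) (by omega) hpm

theorem isBlock.mem_of_take_drop_eq (hsa : isSuffixArray t sa) {n ℓ m : ℕ}
    (hb : isBlock t sa n ℓ m) {p : ℕ} (hp : p < t.length)
    (heq : (t.drop (sa p)).take n = (t.drop (sa ℓ)).take n) : ℓ ≤ p ∧ p ≤ m := by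
  obtain ⟨hℓm, hm, hℓ, hm1, -⟩ := id hb
  constructor
  · by_contra! hpℓ
    obtain ⟨k, rfl⟩ : ∃ k, ℓ = k + 1 := ⟨ℓ - 1, by omega⟩
    have hle := hsa.take_drop_le n (Nat.le_of_lt_succ hpℓ) (by omega)
    have hle' := hsa.take_drop_le n k.le_succ (by omega)
    rw [heq] at hle
    have := (hsa.take_drop_eq_iff n (by omega)).mp (le_antisymm hle' hle)
    omega
  · by_contra! hmp
    have hle := hsa.take_drop_le n m.le_succ (by omega)
    have hle' := hsa.take_drop_le n (Nat.succ_le_of_lt hmp) hp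
    rw [heq, ← hb.take_drop_eq hsa hℓm le_rfl] at hle'
    have := (hsa.take_drop_eq_iff n (by omega)).mp (le_antisymm hle hle')
    omega

end SuffixArray

/- `cycPred` is the cyclic predecessor inside the string containing `q`, so `bwtChar q` is the BWT
symbol of the suffix at `q`; `hmKey h` is the sort key of `Z_h`. -/

section Model

variable (t0 t1 : List A)

def srcBit (n0 q : ℕ) : Bool := decide (n0 ≤ q)

def cycPred (n0 n1 q : ℕ) : ℕ :=
  if q = 0 then n0 - 1 else if q = n0 then n0 + n1 - 1 else q - 1

def ownSuffix (q : ℕ) : List A :=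
  if q < t0.length then t0.drop q else t1.drop (q - t0.length)

def prefixAt (h q : ℕ) : List A := ((t0 ++ t1).drop q).take h

def bwtChar [Inhabited A] (q : ℕ) : A :=
  (t0 ++ t1).getD (cycPred t0.length t1.length q) default

def hmKey (h q : ℕ) : List A ×ₗ Bool ×ₗ List A :=
  toLex (prefixAt t0 t1 h q, toLex (srcBit t0.length q, ownSuffix t0 t1 q))

def hmOrder [LinearOrder A] (h : ℕ) : List ℕ :=
  (List.range (t0.length + t1.length)).mergeSort
    fun q q' => decide (hmKey t0 t1 h q ≤ hmKey t0 t1 h q')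

section CycPred

variable {n0 n1 q q' : ℕ}

theorem cycPred_lt (hq : q < n0 + n1) : cycPred n0 n1 q < n0 + n1 := by
  unfold cycPred; split_ifs <;> omega

theorem srcBit_cycPred (hq : q < n0 + n1) : srcBit n0 (cycPred n0 n1 q) = srcBit n0 q := by
  unfold srcBit cycPred; split_ifs <;> simp only [decide_eq_decide] <;> omega

theorem cycPred_add_one (hq0 : q ≠ 0) (hqn : q ≠ n0) : cycPred n0 n1 q + 1 = q := by
  unfold cycPred; split_ifs <;> omega

theorem cycPred_injOn (h0 : 0 < n0) : Set.InjOn (cycPred n0 n1) (Set.Iio (n0 + n1)) := by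
  intro q hq q' hq' h
  simp only [Set.mem_Iio] at hq hq'
  unfold cycPred at h; split_ifs at h <;> omega

end CycPred

theorem ownSuffix_inj {q q' : ℕ} (hq' : q' < t0.length + t1.length)
    (hb : srcBit t0.length q = srcBit t0.length q')
    (he : ownSuffix t0 t1 q = ownSuffix t0 t1 q') : q = q' := by
  have hlen := congrArg List.length he
  simp only [srcBit, decide_eq_decide] at hb
  unfold ownSuffix at hlen
  split_ifs at hlen <;> simp only [length_drop] at hlen <;> omega

variable {t0 t1} in
theorem ownSuffix_of_lt {k : ℕ} (hk : k < t0.length) : ownSuffix t0 t1 k = t0.drop k := by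
  rw [ownSuffix, if_pos hk]

variable {t0 t1} in
theorem ownSuffix_length_add (k : ℕ) : ownSuffix t0 t1 (t0.length + k) = t1.drop k := by
  rw [ownSuffix, if_neg (by omega), Nat.add_sub_cancel_left]

theorem prefixAt_succ {h p : ℕ} (hp : p < t0.length + t1.length) :
    prefixAt t0 t1 (h + 1) p = (t0 ++ t1)[p]'(by simpa using hp) :: prefixAt t0 t1 h (p + 1) := by
  rw [prefixAt, drop_eq_getElem_cons, take_succ_cons, prefixAt]

section Order

variable [LinearOrder A]

theorem hmKey_lt_iff {h q q' : ℕ} :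
    hmKey t0 t1 h q < hmKey t0 t1 h q' ↔
      prefixAt t0 t1 h q < prefixAt t0 t1 h q' ∨ prefixAt t0 t1 h q = prefixAt t0 t1 h q' ∧
        (srcBit t0.length q < srcBit t0.length q' ∨ srcBit t0.length q = srcBit t0.length q' ∧
          ownSuffix t0 t1 q < ownSuffix t0 t1 q') := by
  simp only [hmKey, Prod.Lex.toLex_lt_toLex]

theorem hmOrder_perm (h : ℕ) : hmOrder t0 t1 h ~ List.range (t0.length + t1.length) :=
  mergeSort_perm _ _

theorem length_hmOrder (h : ℕ) : (hmOrder t0 t1 h).length = t0.length + t1.length := by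
  simp [(hmOrder_perm t0 t1 h).length_eq]

theorem mem_hmOrder {h q : ℕ} : q ∈ hmOrder t0 t1 h ↔ q < t0.length + t1.length := by
  simp [(hmOrder_perm t0 t1 h).mem_iff]

theorem pairwise_hmOrder (h : ℕ) :
    (hmOrder t0 t1 h).Pairwise fun q q' => hmKey t0 t1 h q < hmKey t0 t1 h q' := by
  have hle := pairwise_mergeSort (le := fun q q' => decide (hmKey t0 t1 h q ≤ hmKey t0 t1 h q'))
    (fun a b c hab hbc => by simp only [decide_eq_true_eq] at *; exact le_trans hab hbc)
    (fun a b => by simpa using le_total _ _) (List.range (t0.length + t1.length))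
  refine (hle.and ((hmOrder_perm t0 t1 h).nodup_iff.mpr nodup_range)).imp_of_mem ?_
  intro q q' hq hq' ⟨hqq', hne⟩
  refine lt_of_le_of_ne (by simpa using hqq') fun he => hne ?_
  have he' := congrArg (fun k => (ofLex (ofLex k).2)) he
  simp only [hmKey, ofLex_toLex, Prod.mk.injEq] at he'
  exact ownSuffix_inj t0 t1 ((mem_hmOrder t0 t1).mp hq') he'.1 he'.2

end Order

end Model

section Sentinel

variable {t0 t1 : List A} [Inhabited A]

theorem bwtChar_eq_getElem {q : ℕ} (hq : q < t0.length + t1.length) :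
    bwtChar t0 t1 q = (t0 ++ t1)[cycPred t0.length t1.length q]'(by
      simpa using cycPred_lt hq) :=
  getD_eq_getElem ..

theorem prefixAt_cycPred {h q : ℕ} (hq : q < t0.length + t1.length) :
    prefixAt t0 t1 (h + 1) (cycPred t0.length t1.length q) =
      bwtChar t0 t1 q :: prefixAt t0 t1 h (cycPred t0.length t1.length q + 1) := by
  rw [prefixAt_succ t0 t1 (cycPred_lt hq), bwtChar_eq_getElem hq]

theorem ownSuffix_cycPred {q : ℕ} (hq : q < t0.length + t1.length) (hq0 : q ≠ 0)
    (hqn : q ≠ t0.length) :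
    ownSuffix t0 t1 (cycPred t0.length t1.length q) = bwtChar t0 t1 q :: ownSuffix t0 t1 q := by
  obtain ⟨r, rfl⟩ : ∃ r, q = r + 1 := ⟨q - 1, by omega⟩
  have hr : cycPred t0.length t1.length (r + 1) = r :=
    Nat.succ_injective (cycPred_add_one hq0 hqn)
  rw [bwtChar, hr, getD_eq_getElem _ _ (by simp; omega)]
  unfold ownSuffix
  by_cases hr0 : r + 1 < t0.length
  · rw [if_pos (by omega), if_pos hr0, drop_eq_getElem_cons (by omega), getElem_append_left]
  · rw [if_neg (by omega), if_neg hr0, getElem_append_right (by omega),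
      drop_eq_getElem_cons (by omega), show r + 1 - t0.length = r - t0.length + 1 by omega]

theorem bwtChar_zero (h0 : t0 ≠ []) : bwtChar t0 t1 0 = t0.getLast! := by
  have := length_pos_iff.mpr h0
  rw [getLast!_eq_getLast h0, getLast_eq_getElem, bwtChar, cycPred, if_pos rfl,
    getD_eq_getElem _ _ (by simp; omega), getElem_append_left]

theorem bwtChar_length (h0 : t0 ≠ []) (h1 : t1 ≠ []) :
    bwtChar t0 t1 t0.length = t1.getLast! := by
  have := length_pos_iff.mpr h0
  have := length_pos_iff.mpr h1
  rw [getLast!_eq_getLast h1, getLast_eq_getElem, bwtChar, cycPred, if_neg (by omega),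
    if_pos rfl, getD_eq_getElem _ _ (by simp; omega), getElem_append_right (by omega)]
  congr 1
  omega

omit [Inhabited A] in
theorem drop_append_eq_ownSuffix_append {q : ℕ} :
    (t0 ++ t1).drop q = ownSuffix t0 t1 q ++ if q < t0.length then t1 else [] := by
  rw [drop_append, ownSuffix]
  split_ifs with hq
  · rw [Nat.sub_eq_zero_of_le hq.le, drop_zero]
  · rw [drop_eq_nil_of_le (by omega), nil_append, append_nil]

variable [LinearOrder A]

variable (hsent : Sentinels t0 t1)
include hsent

theorem Sentinels.count_getLast_left_le_one : t0.count (t0.getLast hsent.1) ≤ 1 := by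
  have := (sublist_append_left t0 t1).count_le t0.getLast!
  rwa [hsent.2.2.2.2.2.1, getLast!_eq_getLast hsent.1] at this

theorem Sentinels.count_getLast_right_le_one : t1.count (t1.getLast hsent.2.1) ≤ 1 := by
  have := (sublist_append_right t0 t1).count_le t1.getLast!
  rwa [hsent.2.2.2.2.2.2, getLast!_eq_getLast hsent.2.1] at this

/-- `bwtChar 0` and `bwtChar |t0|` are the sentinels, which occur only once in `t0 ++ t1`. -/
theorem Sentinels.ne_zero_and_ne_length_of_bwtChar_eq {q q' : ℕ}
    (hq : q < t0.length + t1.length) (hq' : q' < t0.length + t1.length)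
    (he : bwtChar t0 t1 q = bwtChar t0 t1 q') (hne : q ≠ q') : q ≠ 0 ∧ q ≠ t0.length := by
  suffices q = 0 ∨ q = t0.length → q = q' from
    ⟨fun h0 => hne (this (.inl h0)), fun hn => hne (this (.inr hn))⟩
  intro hb
  refine cycPred_injOn (length_pos_iff.mpr hsent.1) hq hq'
    (eq_of_getElem_eq_of_count_le_one (l := t0 ++ t1)
    (by simpa using cycPred_lt hq) (by simpa using cycPred_lt hq') ?_ ?_)
  · rw [← bwtChar_eq_getElem hq]
    rcases hb with rfl | rfl
    · rw [bwtChar_zero hsent.1, hsent.2.2.2.2.2.1]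
    · rw [bwtChar_length hsent.1 hsent.2.1, hsent.2.2.2.2.2.2]
  · rwa [← bwtChar_eq_getElem hq, ← bwtChar_eq_getElem hq']

theorem Sentinels.ownSuffix_not_prefix {q q' : ℕ} (hq : q < t0.length + t1.length)
    (hb : srcBit t0.length q = srcBit t0.length q') (hne : q ≠ q') :
    ¬ ownSuffix t0 t1 q <+: ownSuffix t0 t1 q' := by
  simp only [srcBit, decide_eq_decide] at hb
  unfold ownSuffix
  split_ifs with h h'
  · exact not_drop_prefix_drop hsent.1 hsent.count_getLast_left_le_one h hne
  · omega
  · omega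
  · exact not_drop_prefix_drop hsent.2.1 hsent.count_getLast_right_le_one (by omega) (by omega)

theorem Sentinels.drop_lt_drop_of_ownSuffix_lt {q q' : ℕ} (hq : q < t0.length + t1.length)
    (hb : srcBit t0.length q = srcBit t0.length q')
    (hlt : ownSuffix t0 t1 q < ownSuffix t0 t1 q') : (t0 ++ t1).drop q < (t0 ++ t1).drop q' := by
  have htail : (if q < t0.length then t1 else []) = if q' < t0.length then t1 else [] := by
    simp only [srcBit, decide_eq_decide] at hb
    split_ifs <;> first | rfl | omega
  rw [drop_append_eq_ownSuffix_append, drop_append_eq_ownSuffix_append, htail]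
  refine append_lt_append_of_lt_of_not_prefix hlt ?_ _ _
  exact hsent.ownSuffix_not_prefix hq hb (by rintro rfl; exact lt_irrefl _ hlt)

theorem Sentinels.ownSuffix_lt_of_hmKey_lt {h q q' : ℕ} (hq' : q' < t0.length + t1.length)
    (hb : srcBit t0.length q = srcBit t0.length q')
    (hK : hmKey t0 t1 h q < hmKey t0 t1 h q') : ownSuffix t0 t1 q < ownSuffix t0 t1 q' := by
  rcases lt_trichotomy (ownSuffix t0 t1 q) (ownSuffix t0 t1 q') with hlt | heq | hgt
  · exact hlt
  · cases ownSuffix_inj t0 t1 hq' hb heq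
    exact absurd hK (lt_irrefl _)
  · have hle : prefixAt t0 t1 h q' ≤ prefixAt t0 t1 h q :=
      take_le_take_of_le (hsent.drop_lt_drop_of_ownSuffix_lt hq' hb.symm hgt).le h
    rw [hmKey_lt_iff] at hK
    rcases hK with hK | ⟨-, hK | ⟨-, hK⟩⟩
    · exact absurd (hK.trans_le hle) (lt_irrefl _)
    · exact absurd hb hK.ne
    · exact absurd (hK.trans hgt) (lt_irrefl _)

end Sentinel

section HMOrder

variable {t0 t1 : List A} [LinearOrder A]

theorem map_srcBit_hmOrder_zero :
    (hmOrder t0 t1 0).map (srcBit t0.length)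
      = replicate t0.length false ++ replicate t1.length true := by
  have hrange : (List.range (t0.length + t1.length)).map (srcBit t0.length)
      = replicate t0.length false ++ replicate t1.length true := by
    simp only [List.range_add, List.map_append, List.map_map]
    congr 1 <;> refine eq_replicate_iff.mpr ⟨by simp, fun b hb => ?_⟩ <;>
      · obtain ⟨i, hi, rfl⟩ := mem_map.mp hb
        simp [srcBit] at hi ⊢ <;> omega
  refine Perm.eq_of_pairwise (le := (· ≤ ·)) (fun _ _ _ _ => le_antisymm) ?_ ?_
    (hrange ▸ (hmOrder_perm t0 t1 0).map _)
  · refine pairwise_map.mpr ((pairwise_hmOrder t0 t1 0).imp fun hK => ?_)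
    rw [hmKey_lt_iff] at hK
    rcases hK with hK | ⟨-, hK | ⟨hK, -⟩⟩
    · exact absurd hK (by simp [prefixAt])
    · exact hK.le
    · exact hK.le
  · simp [pairwise_append, pairwise_replicate]

variable [Inhabited A] (hsent : Sentinels t0 t1)
include hsent

theorem Sentinels.pairwise_ownSuffix_filter_hmOrder (h : ℕ) (b : Bool) :
    ((hmOrder t0 t1 h).filter fun q => srcBit t0.length q == b).Pairwise
      fun q q' => ownSuffix t0 t1 q < ownSuffix t0 t1 q' := by
  refine ((pairwise_hmOrder t0 t1 h).filter _).imp_of_mem fun hq hq' hK => ?_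
  simp only [mem_filter, beq_iff_eq] at hq hq'
  exact hsent.ownSuffix_lt_of_hmKey_lt ((mem_hmOrder t0 t1).mp hq'.1) (hq.2.trans hq'.2.symm) hK

theorem Sentinels.filter_hmOrder_srcBit_false {sa0 : ℕ → ℕ} (hsa0 : isSuffixArray t0 sa0)
    (h : ℕ) :
    (hmOrder t0 t1 h).filter (fun q => srcBit t0.length q == false)
      = (List.range t0.length).map sa0 := by
  have hmaps : ∀ i < t0.length, sa0 i < t0.length := fun i hi => hsa0.1.mapsTo hi
  refine Perm.eq_of_pairwise (fun _ _ _ _ h h' => absurd (h.trans h') (lt_irrefl _))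
    (hsent.pairwise_ownSuffix_filter_hmOrder h false) ?_ ?_
  · refine pairwise_map.mpr (pairwise_lt_range.imp_of_mem fun hi hj hij => ?_)
    rw [List.mem_range] at hi hj
    rw [ownSuffix_of_lt (hmaps _ hi), ownSuffix_of_lt (hmaps _ hj)]
    exact hsa0.2 _ _ hij hj
  · refine ((hmOrder_perm t0 t1 h).filter _).trans ?_
    have hrange : (List.range (t0.length + t1.length)).filter
        (fun q => srcBit t0.length q == false) = List.range t0.length := by
      simp [List.range_add, srcBit, List.filter_map, Function.comp_def]
    rw [hrange]
    exact (map_range_perm_of_injOn hmaps hsa0.1.injOn).symm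

theorem Sentinels.filter_hmOrder_srcBit_true {sa1 : ℕ → ℕ} (hsa1 : isSuffixArray t1 sa1)
    (h : ℕ) :
    (hmOrder t0 t1 h).filter (fun q => srcBit t0.length q == true)
      = (List.range t1.length).map (fun i => t0.length + sa1 i) := by
  have hmaps : ∀ i < t1.length, sa1 i < t1.length := fun i hi => hsa1.1.mapsTo hi
  refine Perm.eq_of_pairwise (fun _ _ _ _ h h' => absurd (h.trans h') (lt_irrefl _))
    (hsent.pairwise_ownSuffix_filter_hmOrder h true) ?_ ?_
  · refine pairwise_map.mpr (pairwise_lt_range.imp_of_mem fun hi hj hij => ?_)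
    rw [List.mem_range] at hj
    rw [ownSuffix_length_add, ownSuffix_length_add]
    exact hsa1.2 _ _ hij hj
  · refine ((hmOrder_perm t0 t1 h).filter _).trans ?_
    have hrange : (List.range (t0.length + t1.length)).filter
        (fun q => srcBit t0.length q == true) = (List.range t1.length).map (t0.length + ·) := by
      simp [List.range_add, srcBit, List.filter_map, Function.comp_def]
    rw [hrange]
    simpa [Function.comp_def] using
      ((map_range_perm_of_injOn hmaps hsa1.1.injOn).map (t0.length + ·)).symm

end HMOrder

section Step

variable {t0 t1 : List A} [LinearOrder A] [Inhabited A]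

theorem getD_bwtList_left {sa0 : ℕ → ℕ} (hsa0 : isSuffixArray t0 sa0) {r : ℕ}
    (hr : r < t0.length) : (bwtList t0 sa0).getD r default = bwtChar t0 t1 (sa0 r) := by
  have hs : sa0 r < t0.length := hsa0.1.mapsTo hr
  rw [bwtList, getD_eq_getElem _ _ (by simpa), List.getElem_ofFn, bwtOf, bwtChar, cycPred]
  split_ifs <;> first | omega | rw [getD_append _ _ _ _ (by omega)]

theorem getD_bwtList_right (h0 : t0 ≠ []) {sa1 : ℕ → ℕ} (hsa1 : isSuffixArray t1 sa1)
    {r : ℕ} (hr : r < t1.length) :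
    (bwtList t1 sa1).getD r default = bwtChar t0 t1 (t0.length + sa1 r) := by
  have hs : sa1 r < t1.length := hsa1.1.mapsTo hr
  have := length_pos_iff.mpr h0
  rw [bwtList, getD_eq_getElem _ _ (by simpa), List.getElem_ofFn]
  simp only [bwtOf, bwtChar, cycPred]
  split_ifs <;> first | omega | (rw [getD_append_right _ _ _ _ (by omega)]; congr 1; omega)

theorem hmKey_lt_of_sublist_mergeSort_of_bwtChar_eq {h q q' : ℕ}
    (hsub : [q, q'] <+ (hmOrder t0 t1 h).mergeSort
      fun q q' => decide (bwtChar t0 t1 q ≤ bwtChar t0 t1 q'))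
    (heq : bwtChar t0 t1 q = bwtChar t0 t1 q') : hmKey t0 t1 h q < hmKey t0 t1 h q' := by
  have hsub' : [q, q'] <+ (hmOrder t0 t1 h).filter (bwtChar t0 t1 · = bwtChar t0 t1 q) := by
    rw [← filter_mergeSort_key_eq]
    simpa [heq] using hsub.filter (bwtChar t0 t1 · = bwtChar t0 t1 q)
  exact pairwise_iff_forall_sublist.mp ((pairwise_hmOrder t0 t1 h).sublist filter_sublist) hsub'

variable (hsent : Sentinels t0 t1)
include hsent

theorem Sentinels.pairwise_mergeSort_bwtChar (h : ℕ) :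
    ((hmOrder t0 t1 h).mergeSort fun q q' => decide (bwtChar t0 t1 q ≤ bwtChar t0 t1 q')).Pairwise
      fun q q' => hmKey t0 t1 (h + 1) (cycPred t0.length t1.length q) <
        hmKey t0 t1 (h + 1) (cycPred t0.length t1.length q') := by
  have hsorted := pairwise_mergeSort
    (le := fun q q' => decide (bwtChar t0 t1 q ≤ bwtChar t0 t1 q'))
    (fun a b c hab hbc => by simp only [decide_eq_true_eq] at *; exact le_trans hab hbc)
    (fun a b => by simpa using le_total _ _) (hmOrder t0 t1 h)
  refine pairwise_iff_forall_sublist.mpr fun {q q'} hsub => ?_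
  have hmem : ∀ {x}, x ∈ [q, q'] → x < t0.length + t1.length := fun hx =>
    (mem_hmOrder t0 t1).mp (mem_mergeSort.mp (hsub.subset hx))
  have hq := hmem (x := q) (by simp)
  have hq' := hmem (x := q') (by simp)
  have hle : bwtChar t0 t1 q ≤ bwtChar t0 t1 q' := by
    simpa using pairwise_iff_forall_sublist.mp hsorted hsub
  rw [hmKey_lt_iff, prefixAt_cycPred hq, prefixAt_cycPred hq']
  obtain hlt | heq := hle.lt_or_eq
  · exact Or.inl (Lex.rel hlt)
  have hK := hmKey_lt_of_sublist_mergeSort_of_bwtChar_eq hsub heq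
  have hne : q ≠ q' := by rintro rfl; exact lt_irrefl _ hK
  obtain ⟨hq0, hqn⟩ := hsent.ne_zero_and_ne_length_of_bwtChar_eq hq hq' heq hne
  obtain ⟨hq'0, hq'n⟩ := hsent.ne_zero_and_ne_length_of_bwtChar_eq hq' hq heq.symm hne.symm
  rw [cycPred_add_one hq0 hqn, cycPred_add_one hq'0 hq'n, srcBit_cycPred hq, srcBit_cycPred hq',
    ownSuffix_cycPred hq hq0 hqn, ownSuffix_cycPred hq' hq'0 hq'n, heq]
  rw [hmKey_lt_iff] at hK
  rcases hK with hK | ⟨hP, hK⟩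
  · exact Or.inl (Lex.cons hK)
  · exact Or.inr ⟨by rw [hP], hK.imp_right fun ⟨hb, ho⟩ => ⟨hb, Lex.cons ho⟩⟩

theorem Sentinels.hmOrder_succ (h : ℕ) :
    hmOrder t0 t1 (h + 1) = ((hmOrder t0 t1 h).mergeSort
      fun q q' => decide (bwtChar t0 t1 q ≤ bwtChar t0 t1 q')).map
        (cycPred t0.length t1.length) := by
  refine Perm.eq_of_pairwise (fun _ _ _ _ h h' => absurd (h.trans h') (lt_irrefl _))
    (pairwise_hmOrder t0 t1 (h + 1)) (pairwise_map.mpr (hsent.pairwise_mergeSort_bwtChar h)) ?_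
  refine (hmOrder_perm t0 t1 (h + 1)).trans ?_
  refine ((((mergeSort_perm _ _).trans (hmOrder_perm t0 t1 h)).map _).trans ?_).symm
  exact map_range_perm_of_injOn (fun _ => cycPred_lt)
    (cycPred_injOn (length_pos_iff.mpr hsent.1))

end Step

def hmTag [Inhabited A] (bwt0 bwt1 : List A) (Z : List Bool) (k : ℕ) : Bool × A :=
  (Z.getD k false, if Z.getD k false then bwt1.getD ((Z.take k).count true) default
    else bwt0.getD ((Z.take k).count false) default)

theorem hmStep_eq_map_hmTag [LinearOrder A] [Inhabited A] (bwt0 bwt1 : List A) (Z : List Bool) :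
    hmStep bwt0 bwt1 Z = (((List.range Z.length).map (hmTag bwt0 bwt1 Z)).mergeSort
      fun p q => decide (p.2 ≤ q.2)).map Prod.fst :=
  rfl

section HMZ

variable {t0 t1 : List A} [LinearOrder A] [Inhabited A] (hsent : Sentinels t0 t1)
  {sa0 sa1 : ℕ → ℕ} (hsa0 : isSuffixArray t0 sa0) (hsa1 : isSuffixArray t1 sa1)
include hsent hsa0 hsa1

theorem Sentinels.hmTag_hmOrder {h k : ℕ} (hk : k < (hmOrder t0 t1 h).length) :
    hmTag (bwtList t0 sa0) (bwtList t1 sa1) ((hmOrder t0 t1 h).map (srcBit t0.length)) k =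
      (srcBit t0.length (hmOrder t0 t1 h)[k], bwtChar t0 t1 (hmOrder t0 t1 h)[k]) := by
  have hbit : ((hmOrder t0 t1 h).map (srcBit t0.length)).getD k false =
      srcBit t0.length (hmOrder t0 t1 h)[k] := by
    rw [getD_eq_getElem _ _ (by simpa), getElem_map]
  rw [hmTag, hbit]
  cases hb : srcBit t0.length (hmOrder t0 t1 h)[k]
  · have hel := getElem?_filter_count_take_map hk hb
    rw [hsent.filter_hmOrder_srcBit_false hsa0] at hel
    simp only [getElem?_map, Option.map_eq_some_iff, getElem?_eq_some_iff, getElem_range,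
      length_range] at hel
    obtain ⟨_, ⟨hr, rfl⟩, hq⟩ := hel
    rw [if_neg Bool.false_ne_true, getD_bwtList_left hsa0 hr, hq]
  · have hel := getElem?_filter_count_take_map hk hb
    rw [hsent.filter_hmOrder_srcBit_true hsa1] at hel
    simp only [getElem?_map, Option.map_eq_some_iff, getElem?_eq_some_iff, getElem_range,
      length_range] at hel
    obtain ⟨_, ⟨hr, rfl⟩, hq⟩ := hel
    rw [if_pos rfl, getD_bwtList_right hsent.1 hsa1 hr, hq]

theorem Sentinels.hmStep_map_srcBit_hmOrder (h : ℕ) :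
    hmStep (bwtList t0 sa0) (bwtList t1 sa1) ((hmOrder t0 t1 h).map (srcBit t0.length))
      = (hmOrder t0 t1 (h + 1)).map (srcBit t0.length) := by
  have htags : (List.range ((hmOrder t0 t1 h).map (srcBit t0.length)).length).map
      (hmTag (bwtList t0 sa0) (bwtList t1 sa1) ((hmOrder t0 t1 h).map (srcBit t0.length)))
      = (hmOrder t0 t1 h).map fun q => (srcBit t0.length q, bwtChar t0 t1 q) :=
    ext_getElem (by simp) fun k hk _ => by
      simp only [getElem_map, getElem_range]
      exact hsent.hmTag_hmOrder hsa0 hsa1 (by simpa using hk)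
  rw [hmStep_eq_map_hmTag, htags, ← map_mergeSort
    (r := fun q q' => decide (bwtChar t0 t1 q ≤ bwtChar t0 t1 q')) (fun _ _ _ _ => rfl),
    List.map_map, hsent.hmOrder_succ, List.map_map]
  refine map_congr_left fun q hq => (srcBit_cycPred ?_).symm
  exact (mem_hmOrder t0 t1).mp (mem_mergeSort.mp hq)

theorem Sentinels.hmZ_eq_map_srcBit_hmOrder (g : ℕ) :
    hmZ (bwtList t0 sa0) (bwtList t1 sa1) t0.length t1.length g
      = (hmOrder t0 t1 g).map (srcBit t0.length) := by
  induction g with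
  | zero => exact map_srcBit_hmOrder_zero.symm
  | succ g ih => rw [hmZ, ih, hsent.hmStep_map_srcBit_hmOrder hsa0 hsa1]

end HMZ

section Prefixes

variable {t0 t1 : List A} [LinearOrder A] {sa01 : ℕ → ℕ}
  (hsa01 : isSuffixArray (t0 ++ t1) sa01)
include hsa01

theorem map_prefixAt_hmOrder (h : ℕ) :
    (hmOrder t0 t1 h).map (prefixAt t0 t1 h)
      = (List.range (t0.length + t1.length)).map (prefixAt t0 t1 h ∘ sa01) := by
  have hmaps : ∀ i < t0.length + t1.length, sa01 i < t0.length + t1.length := fun i hi => by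
    simpa using hsa01.1.mapsTo (show i ∈ Set.Iio (t0 ++ t1).length by simpa using hi)
  have hinj : Set.InjOn sa01 (Set.Iio (t0.length + t1.length)) := by
    simpa using hsa01.1.injOn
  refine Perm.eq_of_pairwise (le := (· ≤ ·)) (fun _ _ _ _ => le_antisymm) ?_ ?_ ?_
  · refine pairwise_map.mpr ((pairwise_hmOrder t0 t1 h).imp fun hK => ?_)
    rw [hmKey_lt_iff] at hK
    exact hK.elim le_of_lt fun hK => hK.1.le
  · refine pairwise_map.mpr (pairwise_lt_range.imp_of_mem fun _ hj hij => ?_)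
    exact hsa01.take_drop_le h hij.le (by simpa using hj)
  · rw [← List.map_map]
    exact ((hmOrder_perm t0 t1 h).trans (map_range_perm_of_injOn hmaps hinj).symm).map _

theorem prefixAt_getElem_hmOrder {g h p : ℕ} (hhg : h ≤ g) (hp : p < (hmOrder t0 t1 g).length) :
    prefixAt t0 t1 h (hmOrder t0 t1 g)[p] = prefixAt t0 t1 h (sa01 p) := by
  have heq := getElem_of_eq (map_prefixAt_hmOrder hsa01 g) (by simpa using hp)
  simp only [getElem_map, getElem_range, Function.comp_apply] at heq
  simpa only [prefixAt, take_take, min_eq_left hhg] using congrArg (take h) heq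

end Prefixes

theorem srcBit_eq_of_prefixAt_eq [LinearOrder A] {t0 t1 : List A} {sa01 : ℕ → ℕ}
    (hsa01 : isSuffixArray (t0 ++ t1) sa01) {h ℓ m : ℕ}
    (hblock : isBlock (t0 ++ t1) sa01 h ℓ m) {b : Bool}
    (hmono : ∀ p, ℓ ≤ p → p ≤ m →
      ((hmOrder t0 t1 h).map (srcBit t0.length)).getD p false = b)
    {q : ℕ} (hq : q < t0.length + t1.length)
    (hkey : prefixAt t0 t1 h q = prefixAt t0 t1 h (sa01 ℓ)) : srcBit t0.length q = b := by
  obtain ⟨p, hp, rfl⟩ := getElem_of_mem ((mem_hmOrder t0 t1 (h := h)).mpr hq)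
  obtain ⟨hℓp, hpm⟩ := hblock.mem_of_take_drop_eq hsa01 (by simpa [length_hmOrder] using hp)
    ((prefixAt_getElem_hmOrder hsa01 le_rfl hp).symm.trans hkey)
  have := hmono p hℓp hpm
  rwa [getD_eq_getElem _ _ (by simpa using hp), getElem_map] at this

/-- if `Z_h[ℓ,m]` is a monochrome block at the end of iteration
`h`, then for every `g > h` the content of positions `ℓ..m` is unchanged:
`Z_g[ℓ,m] = Z_h[ℓ,m]`. -/
theorem monochrome_stable [LinearOrder A] [Inhabited A]
    (t0 t1 : List A) (sa0 sa1 sa01 : ℕ → ℕ)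
    (hsent : Sentinels t0 t1)
    (hsa0 : isSuffixArray t0 sa0) (hsa1 : isSuffixArray t1 sa1)
    (hsa01 : isSuffixArray (t0 ++ t1) sa01)
    (h ℓ m : ℕ) (b : Bool)
    (hblock : isBlock (t0 ++ t1) sa01 h ℓ m)
    (hmono : ∀ p, ℓ ≤ p → p ≤ m →
      (hmZ (bwtList t0 sa0) (bwtList t1 sa1) t0.length t1.length h).getD p false
        = b) :
    ∀ g, h < g → ∀ p, ℓ ≤ p → p ≤ m →
      (hmZ (bwtList t0 sa0) (bwtList t1 sa1) t0.length t1.length g).getD p false =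
      (hmZ (bwtList t0 sa0) (bwtList t1 sa1) t0.length t1.length h).getD p false := by
  intro g hg p hℓp hpm
  have hZ := hsent.hmZ_eq_map_srcBit_hmOrder hsa0 hsa1
  have hp : p < (hmOrder t0 t1 g).length := by
    simpa [length_hmOrder] using hpm.trans_lt hblock.2.1
  rw [hmono p hℓp hpm, hZ, getD_eq_getElem _ _ (by simpa using hp), getElem_map]
  refine srcBit_eq_of_prefixAt_eq hsa01 hblock (fun p hℓp hpm => hZ h ▸ hmono p hℓp hpm)
    ((mem_hmOrder t0 t1).mp (getElem_mem hp)) ?_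
  rw [prefixAt_getElem_hmOrder hsa01 hg.le hp]
  exact hblock.take_drop_eq hsa01 hℓp hpm
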